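/- For any distinct i, j ∈ {1,…,9}, the composition Mⱼ ∘ Mᵢ of the Manin involution actions on L_X equals the Kac translation T_{𝓔ᵢ−𝓔ⱼ} (as ℤ-linear endomorphisms of L_X). -/

import Mathlib

open Finset

/-- `L_X`: the free ℤ-module with basis `𝓔₀, 𝓔₁, …, 𝓔₉`. -/
abbrev LX : Type := Fin 10 → ℤ

noncomputable def basisX : Module.Basis (Fin 10) ℤ LX := Pi.basisFun ℤ (Fin 10)

/-- The basis vector `𝓔ₐ` of `L_X`. -/
noncomputable def EX (a : Fin 10) : LX := basisX a

/-- The symmetric bilinear form on `L_X` with `⟨𝓔₀,𝓔₀⟩ = 1`, `⟨𝓔ᵢ,𝓔ᵢ⟩ = -1` for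
`i = 1,…,9`, and `⟨𝓔ₐ,𝓔_b⟩ = 0` for `a ≠ b`. -/
noncomputable def formX : LX →ₗ[ℤ] LX →ₗ[ℤ] ℤ :=
  Matrix.toLinearMap₂' ℤ (Matrix.diagonal (fun a : Fin 10 => if a = 0 then (1 : ℤ) else -1))

/-- The anticanonical class `δ = 3𝓔₀ - 𝓔₁ - ⋯ - 𝓔₉`. -/
noncomputable def deltaX : LX := (3 : ℤ) • EX 0 - ∑ k ∈ ({0} : Finset (Fin 10))ᶜ, EX k

/-- The Kac translation `T_α(λ) = λ + ⟨δ,λ⟩α + (⟨δ,λ⟩ - ⟨α,λ⟩)δ` on `L_X`. -/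
noncomputable def kacX (α : LX) : LX →ₗ[ℤ] LX :=
  LinearMap.id + (formX deltaX).smulRight α + (formX deltaX - formX α).smulRight deltaX

/-- The Manin involution action `Mᵢ` on `L_X` (for `i ∈ {1,…,9}`, i.e. `i ≠ 0`):
`Mᵢ(𝓔₀) = 5𝓔₀ - 4𝓔ᵢ - Σ_{k≠i}𝓔ₖ`, `Mᵢ(𝓔ᵢ) = 4𝓔₀ - 3𝓔ᵢ - Σ_{k≠i}𝓔ₖ`,
`Mᵢ(𝓔ⱼ) = 𝓔₀ - 𝓔ᵢ - 𝓔ⱼ` for `j ≠ i`. -/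
noncomputable def ManinX (i : Fin 10) : LX →ₗ[ℤ] LX :=
  basisX.constr ℤ (fun a =>
    if a = 0 then
      (5 : ℤ) • EX 0 - (4 : ℤ) • EX i - ∑ k ∈ ({0, i} : Finset (Fin 10))ᶜ, EX k
    else if a = i then
      (4 : ℤ) • EX 0 - (3 : ℤ) • EX i - ∑ k ∈ ({0, i} : Finset (Fin 10))ᶜ, EX k
    else EX 0 - EX i - EX a)


lemma EX_apply (a b : Fin 10) : EX a b = if b = a then 1 else 0 := by
  simp [EX, basisX, Pi.single_apply]

lemma sum_EX_apply (s : Finset (Fin 10)) (b : Fin 10) :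
    (∑ k ∈ s, EX k) b = if b ∈ s then 1 else 0 := by
  simp [Finset.sum_apply, EX_apply, Finset.sum_ite_eq s b (fun _ => (1:ℤ))]

lemma formX_apply (x y : LX) :
    formX x y = ∑ a, (if a = 0 then (1:ℤ) else -1) * x a * y a := by
  simp [formX, Matrix.toLinearMap₂'_apply, Matrix.diagonal]

lemma deltaX_apply (b : Fin 10) : deltaX b = if b = 0 then 3 else -1 := by
  simp [deltaX, EX_apply, sum_EX_apply]
  split <;> simp_all

lemma maninX_eq (i : Fin 10) (hi : i ≠ 0) :
    ManinX i = -LinearMap.id + (formX deltaX).smulRight (EX 0 - EX i)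
      + (formX (EX 0 - EX i)).smulRight deltaX := by
  apply basisX.ext; intro a
  rw [ManinX, Module.Basis.constr_basis]
  funext b
  have hb : (basisX a : LX) = EX a := rfl
  simp only [hb, LinearMap.add_apply, LinearMap.neg_apply, LinearMap.id_apply,
    LinearMap.smulRight_apply, Pi.add_apply, Pi.neg_apply, Pi.smul_apply, smul_eq_mul,
    formX_apply, EX_apply, deltaX_apply, Pi.sub_apply]
  simp only [mul_ite, ite_mul, one_mul, mul_one, zero_mul, mul_zero, neg_mul, mul_neg,
    Finset.sum_ite_eq', Finset.mem_univ, if_true]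
  split_ifs <;> simp_all [EX_apply, Finset.sum_ite_eq'] <;> omega

lemma formX_EX_apply (a : Fin 10) (y : LX) :
    formX (EX a) y = (if a = 0 then 1 else -1) * y a := by
  rw [formX_apply, Finset.sum_eq_single a] <;>
    simp_all [EX_apply] <;> intro h <;> simp [h]

lemma formX_apply_EX (x : LX) (b : Fin 10) :
    formX x (EX b) = (if b = 0 then 1 else -1) * x b := by
  rw [formX_apply, Finset.sum_eq_single b] <;>
    simp_all [EX_apply] <;> intro h <;> simp [h]

lemma EX_self (a : Fin 10) : EX a a = 1 := by simp [EX_apply]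

lemma hD_u (k : Fin 10) (hk : k ≠ 0) : formX deltaX (EX 0 - EX k) = 2 := by
  simp [map_sub, formX_apply_EX, deltaX_apply, hk]

lemma hDd : formX deltaX deltaX = 0 := by
  simp [formX_apply, deltaX_apply, Fin.sum_univ_succ, Fin.succ_ne_zero]

lemma hFd (k : Fin 10) (hk : k ≠ 0) : formX (EX 0 - EX k) deltaX = 2 := by
  have := formX_EX_apply 0 deltaX
  have := formX_EX_apply k deltaX
  simp_all [map_sub, deltaX_apply, hk]

lemma hFu (i j : Fin 10) (hi : i ≠ 0) (hj : j ≠ 0) (hij : i ≠ j) :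
    formX (EX 0 - EX j) (EX 0 - EX i) = 1 := by
  have h1 := formX_EX_apply 0 (EX 0 - EX i)
  have h2 := formX_EX_apply j (EX 0 - EX i)
  rw [map_sub] at h1 h2
  simp only [map_sub] at *
  have h0 : (0:Fin 10) ≠ i := Ne.symm hi
  simp_all [EX_apply, hj, Ne.symm hij, h0]
  omega

lemma hD_E0 : formX deltaX (EX 0) = 3 := by
  simp [formX_apply_EX, deltaX_apply]

lemma hD_Ek (k : Fin 10) (hk : k ≠ 0) : formX deltaX (EX k) = 1 := by
  simp [formX_apply_EX, deltaX_apply, hk]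

lemma hE00 : formX (EX 0) (EX 0) = 1 := by simp [formX_EX_apply, EX_apply]
lemma hE0k (k : Fin 10) (hk : k ≠ 0) : formX (EX 0) (EX k) = 0 := by
  simp [formX_EX_apply, EX_apply, Ne.symm hk]
lemma hEk0 (k : Fin 10) (hk : k ≠ 0) : formX (EX k) (EX 0) = 0 := by
  simp [formX_EX_apply, EX_apply, hk, Ne.symm hk]
lemma hEkl (k l : Fin 10) (hkl : k ≠ l) : formX (EX k) (EX l) = 0 := by
  simp [formX_EX_apply, EX_apply, hkl]
lemma hE0d : formX (EX 0) deltaX = 3 := by simp [formX_EX_apply, deltaX_apply]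
lemma hEkd (k : Fin 10) (hk : k ≠ 0) : formX (EX k) deltaX = 1 := by
  simp [formX_EX_apply, deltaX_apply, hk]
lemma hdE0 : formX deltaX (EX 0) = 3 := hD_E0

/-- `Mⱼ ∘ Mᵢ` equals the Kac translation `T_{𝓔ᵢ-𝓔ⱼ}` on `L_X`. -/
theorem ManinX_comp_eq_kacX (i j : Fin 10) (hi : i ≠ 0) (hj : j ≠ 0) (hij : i ≠ j) :
    ManinX j ∘ₗ ManinX i = kacX (EX i - EX j) := by
  apply LinearMap.ext; intro x
  have hsplit : EX i - EX j = (EX 0 - EX j) - (EX 0 - EX i) := by abel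
  rw [LinearMap.comp_apply, maninX_eq i hi, maninX_eq j hj, kacX, hsplit]
  simp only [LinearMap.add_apply, LinearMap.sub_apply, LinearMap.neg_apply, LinearMap.id_apply,
    LinearMap.smulRight_apply, map_add, map_neg, map_sub, map_smul, smul_eq_mul,
    hD_u i hi, hD_u j hj, hDd, hFd i hi, hFd j hj, hFu i j hi hj hij, hD_E0, hD_Ek i hi, hD_Ek j hj,
    hE00, hE0k i hi, hE0k j hj, hEk0 i hi, hEk0 j hj, hEkl j i (Ne.symm hij), hEkl i j hij,
    hE0d, hEkd i hi, hEkd j hj]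
  module
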